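/- arXiv:2205.14446 — 3 statements merged into one kernel-verified Lean document; each statement's English description precedes it below -/
import Mathlib

section
/- Let (Y_k)_{k≥1} be independent nonnegative random variables with E[Y_k] = 1, and suppose for each k = 1,…,n₀ there exists α_k > 0 with limsup_{x→∞} x^{α_k} E[e^{-x Y_k}] < ∞. Then E[(Y₁ + ⋯ + Y_{n₀})^{-α}] < ∞ for every α < α₁ + ⋯ + α_{n₀}. -/
/-!
For `R ≥ 0` and `a > 0`, Fubini applied to `Γ(a) R^{-a} = ∫_0^∞ x^{a-1} e^{-xR} dx` gives
`Γ(a) E[R^{-a}] = ∫_0^∞ x^{a-1} E[e^{-xR}] dx`. For `R = Y₁ + ⋯ + Y_{n₀}`, independence factors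
the Laplace transform as `∏ E[e^{-xY_k}] = O(x^{-(α₁ + ⋯ + α_{n₀})})` at infinity, while it is at
most `1` near `0`; so the right-hand side is finite as soon as `0 < a < α₁ + ⋯ + α_{n₀}`.
-/

open MeasureTheory ProbabilityTheory Filter Set

theorem lintegral_Ioi_rpow_sub_one_eq_top {a : ℝ} :
    ∫⁻ x in Ioi (0 : ℝ), ENNReal.ofReal (x ^ (a - 1)) = ⊤ := by
  by_contra h
  refine not_integrableOn_Ioi_rpow (a - 1) ⟨by fun_prop, ?_⟩
  rw [hasFiniteIntegral_iff_ofReal]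
  · exact lt_top_iff_ne_top.2 h
  · exact (ae_restrict_iff' measurableSet_Ioi).2 (ae_of_all _ fun x hx => Real.rpow_nonneg hx.le _)

theorem lintegral_Ioi_rpow_sub_one_mul_exp_neg_mul {a r : ℝ} (ha : 0 < a) (hr : 0 ≤ r) :
    ∫⁻ x in Ioi (0 : ℝ), ENNReal.ofReal (x ^ (a - 1) * Real.exp (-x * r))
      = ENNReal.ofReal (Real.Gamma a) * ENNReal.ofReal r ^ (-a) := by
  rcases hr.lt_or_eq with hr | rfl
  · have hint : IntegrableOn (fun x : ℝ => x ^ (a - 1) * Real.exp (-x * r)) (Ioi 0) := by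
      simpa only [Real.rpow_one, neg_mul, mul_comm r] using
        integrableOn_rpow_mul_exp_neg_mul_rpow (by linarith : -1 < a - 1) zero_lt_one hr
    have hval : ∫ x in Ioi (0 : ℝ), x ^ (a - 1) * Real.exp (-x * r) = r ^ (-a) * Real.Gamma a := by
      simpa only [neg_mul, mul_comm r, one_div, Real.inv_rpow hr.le, Real.rpow_neg hr.le] using
        Real.integral_rpow_mul_exp_neg_mul_Ioi ha hr
    have hnonneg : ∀ᵐ x ∂volume.restrict (Ioi (0 : ℝ)), 0 ≤ x ^ (a - 1) * Real.exp (-x * r) :=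
      (ae_restrict_iff' measurableSet_Ioi).2 (ae_of_all _ fun x (hx : 0 < x) => by positivity)
    rw [← ofReal_integral_eq_lintegral_ofReal hint hnonneg, hval,
      ENNReal.ofReal_mul (by positivity), ENNReal.ofReal_rpow_of_pos hr, mul_comm]
  · -- at `r = 0` both sides are `⊤`
    simp only [mul_zero, Real.exp_zero, mul_one, lintegral_Ioi_rpow_sub_one_eq_top,
      ENNReal.ofReal_zero, ENNReal.zero_rpow_of_neg (neg_neg_of_pos ha),
      ENNReal.mul_top (ENNReal.ofReal_pos.2 (Real.Gamma_pos_of_pos ha)).ne']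

theorem ofReal_Gamma_mul_lintegral_rpow_neg {Ω : Type*} [MeasurableSpace Ω] {μ : Measure Ω}
    [SFinite μ] {R : Ω → ℝ} (hR : Measurable R) (hR0 : ∀ᵐ ω ∂μ, 0 ≤ R ω) {a : ℝ} (ha : 0 < a) :
    ENNReal.ofReal (Real.Gamma a) * ∫⁻ ω, ENNReal.ofReal (R ω) ^ (-a) ∂μ
      = ∫⁻ x in Ioi (0 : ℝ), ENNReal.ofReal (x ^ (a - 1))
          * ∫⁻ ω, ENNReal.ofReal (Real.exp (-x * R ω)) ∂μ := by
  calc _ = ∫⁻ ω, (∫⁻ x in Ioi (0 : ℝ), ENNReal.ofReal (x ^ (a - 1) * Real.exp (-x * R ω))) ∂μ := by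
        rw [← lintegral_const_mul' _ _ ENNReal.ofReal_ne_top]
        refine lintegral_congr_ae ?_
        filter_upwards [hR0] with ω hω
        rw [lintegral_Ioi_rpow_sub_one_mul_exp_neg_mul ha hω]
    _ = ∫⁻ x in Ioi (0 : ℝ), ∫⁻ ω, ENNReal.ofReal (x ^ (a - 1) * Real.exp (-x * R ω)) ∂μ :=
        lintegral_lintegral_swap (by fun_prop)
    _ = _ := setLIntegral_congr_fun measurableSet_Ioi fun x (hx : 0 < x) => by
        simp_rw [ENNReal.ofReal_mul (Real.rpow_nonneg hx.le _)]
        exact lintegral_const_mul' _ _ ENNReal.ofReal_ne_top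

section Mgf

variable {Ω : Type*} [MeasurableSpace Ω] {μ : Measure Ω} {X : Ω → ℝ} {t : ℝ}

theorem integrable_exp_mul_of_nonpos [IsFiniteMeasure μ] (hX : AEMeasurable X μ)
    (hX0 : ∀ᵐ ω ∂μ, 0 ≤ X ω) (ht : t ≤ 0) : Integrable (fun ω => Real.exp (t * X ω)) μ := by
  refine (integrable_const (1 : ℝ)).mono' (by fun_prop) ?_
  filter_upwards [hX0] with ω hω
  rw [Real.norm_of_nonneg (Real.exp_pos _).le, Real.exp_le_one_iff]
  exact mul_nonpos_of_nonpos_of_nonneg ht hω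

theorem lintegral_ofReal_exp_mul_eq_mgf [IsFiniteMeasure μ] (hX : AEMeasurable X μ)
    (hX0 : ∀ᵐ ω ∂μ, 0 ≤ X ω) (ht : t ≤ 0) :
    ∫⁻ ω, ENNReal.ofReal (Real.exp (t * X ω)) ∂μ = ENNReal.ofReal (mgf X μ t) :=
  (ofReal_integral_eq_lintegral_ofReal (integrable_exp_mul_of_nonpos hX hX0 ht)
    (ae_of_all _ fun _ => (Real.exp_pos _).le)).symm

theorem mgf_le_one_of_nonpos [IsProbabilityMeasure μ] (hX0 : ∀ᵐ ω ∂μ, 0 ≤ X ω) (ht : t ≤ 0) :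
    mgf X μ t ≤ 1 := by
  refine (integral_mono_of_nonneg (ae_of_all _ fun _ => (Real.exp_pos _).le)
    (integrable_const (1 : ℝ)) ?_).trans_eq (by simp)
  filter_upwards [hX0] with ω hω
  exact Real.exp_le_one_iff.2 (mul_nonpos_of_nonpos_of_nonneg ht hω)

end Mgf

theorem Finset.exists_eventually_rpow_sum_mul_prod_le {ι : Type*} (s : Finset ι)
    {f : ι → ℝ → ℝ} {α : ι → ℝ} (hf0 : ∀ k ∈ s, ∀ x, 0 ≤ f k x)
    (hf : ∀ k ∈ s, ∃ C, ∀ᶠ x in atTop, x ^ α k * f k x ≤ C) :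
    ∃ C, ∀ᶠ x in atTop, x ^ (∑ k ∈ s, α k) * ∏ k ∈ s, f k x ≤ C := by
  classical
  induction s using Finset.induction_on with
  | empty => exact ⟨1, by simp⟩
  | insert i s hi ih =>
    obtain ⟨Ci, hCi⟩ := hf i (mem_insert_self i s)
    obtain ⟨C, hC⟩ := ih (fun k hk => hf0 k (mem_insert_of_mem hk))
      (fun k hk => hf k (mem_insert_of_mem hk))
    refine ⟨Ci * C, ?_⟩
    filter_upwards [hCi, hC, eventually_gt_atTop 0] with x hxi hx hx0
    have hprod : 0 ≤ ∏ k ∈ s, f k x := prod_nonneg fun k hk => hf0 k (mem_insert_of_mem hk) x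
    have hfi : 0 ≤ f i x := hf0 i (mem_insert_self i s) x
    rw [sum_insert hi, prod_insert hi, Real.rpow_add hx0, mul_mul_mul_comm]
    exact mul_le_mul hxi hx (by positivity) ((by positivity : (0 : ℝ) ≤ _).trans hxi)

theorem lintegral_Ioi_rpow_mul_lt_top {f : ℝ → ℝ} {a s C : ℝ} (ha : 0 < a) (has : a < s)
    (hf1 : ∀ x > 0, f x ≤ 1) (hfC : ∀ᶠ x in atTop, x ^ s * f x ≤ C) :
    ∫⁻ x in Ioi (0 : ℝ), ENNReal.ofReal (x ^ (a - 1)) * ENNReal.ofReal (f x) < ⊤ := by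
  obtain ⟨M, hM⟩ := eventually_atTop.1 (hfC.and (eventually_ge_atTop 1))
  have hM0 : 0 < M := zero_lt_one.trans_le (hM M le_rfl).2
  rw [← Ioc_union_Ioi_eq_Ioi hM0.le, lintegral_union measurableSet_Ioi Ioc_disjoint_Ioi_same]
  refine ENNReal.add_lt_top.2 ⟨?_, ?_⟩
  · refine (setLIntegral_mono (by fun_prop) fun x hx => ?_).trans_lt
      ((intervalIntegral.intervalIntegrable_rpow' (by linarith : -1 < a - 1)).1.lintegral_lt_top)
    exact mul_le_of_le_one_right' (ENNReal.ofReal_le_one.2 (hf1 x hx.1))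
  · have hint : IntegrableOn (fun x : ℝ => C * x ^ (a - 1 - s)) (Ioi M) :=
      (integrableOn_Ioi_rpow_of_lt (by linarith : a - 1 - s < -1) hM0).const_mul C
    refine (setLIntegral_mono (by fun_prop) fun x (hx : M < x) => ?_).trans_lt
      hint.lintegral_lt_top
    have hx0 : 0 < x := hM0.trans hx
    rw [← ENNReal.ofReal_mul (Real.rpow_nonneg hx0.le _)]
    refine ENNReal.ofReal_le_ofReal ?_
    calc x ^ (a - 1) * f x = x ^ (a - 1 - s) * (x ^ s * f x) := by
          rw [← mul_assoc, ← Real.rpow_add hx0, sub_add_cancel]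
      _ ≤ x ^ (a - 1 - s) * C := by gcongr; exact (hM x hx.le).1
      _ = C * x ^ (a - 1 - s) := mul_comm _ _

theorem stmt8_general {Ω : Type*} [MeasureSpace Ω] [IsProbabilityMeasure (ℙ : Measure Ω)]
    (n₀ : ℕ) (Y : ℕ → Ω → ℝ) (hmeas : ∀ k, Measurable (Y k))
    (hindep : iIndepFun Y ℙ)
    (hpos : ∀ k, ∀ᵐ ω ∂ℙ, 0 ≤ Y k ω)
    (α : ℕ → ℝ)
    (hlap : ∀ k < n₀, ∃ C : ℝ, ∀ᶠ x in atTop,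
      x ^ (α k) * ∫ ω, Real.exp (-x * Y k ω) ∂ℙ ≤ C)
    (a : ℝ) (ha : 0 < a) (ha' : a < ∑ k ∈ Finset.range n₀, α k) :
    (∫⁻ ω, (ENNReal.ofReal (∑ k ∈ Finset.range n₀, Y k ω)) ^ (-a) ∂ℙ) ≠ ⊤ := by
  set S : Ω → ℝ := fun ω => ∑ k ∈ Finset.range n₀, Y k ω
  have hS : Measurable S := Finset.measurable_sum _ fun k _ => hmeas k
  have hS0 : ∀ᵐ ω ∂ℙ, 0 ≤ S ω := by
    filter_upwards [ae_all_iff.2 hpos] with ω hω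
    exact Finset.sum_nonneg fun k _ => hω k
  have hmgf (t : ℝ) : mgf S ℙ t = ∏ k ∈ Finset.range n₀, mgf (Y k) ℙ t := by
    rw [← hindep.mgf_sum hmeas, Finset.sum_fn]
  obtain ⟨C, hC⟩ : ∃ C, ∀ᶠ x in atTop, x ^ (∑ k ∈ Finset.range n₀, α k) * mgf S ℙ (-x) ≤ C := by
    simp_rw [hmgf]
    exact Finset.exists_eventually_rpow_sum_mul_prod_le _ (fun k _ x => mgf_nonneg)
      fun k hk => hlap k (Finset.mem_range.1 hk)
  have hfin := lintegral_Ioi_rpow_mul_lt_top ha ha'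
    (fun x hx => mgf_le_one_of_nonpos hS0 (neg_nonpos.2 hx.le)) hC
  rw [← setLIntegral_congr_fun measurableSet_Ioi fun x (hx : 0 < x) =>
    congrArg _ (lintegral_ofReal_exp_mul_eq_mgf hS.aemeasurable hS0 (neg_nonpos.2 hx.le)),
    ← ofReal_Gamma_mul_lintegral_rpow_neg hS hS0 ha] at hfin
  intro htop
  rw [htop, ENNReal.mul_top (ENNReal.ofReal_pos.2 (Real.Gamma_pos_of_pos ha)).ne'] at hfin
  exact hfin.ne rfl

/-- If `Y₁,…,Y_{n₀}` are independent nonnegative with unit mean and each Laplace transform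
satisfies `limsup_{x→∞} x^{α_k} E[e^{-xY_k}] < ∞` for some `α_k > 0`, then
`E[(Y₁+⋯+Y_{n₀})^{-a}] < ∞` for every `0 < a < α₁+⋯+α_{n₀}` (negative powers taken in
`ℝ≥0∞`). -/
theorem stmt8 {Ω : Type*} [MeasureSpace Ω] [IsProbabilityMeasure (ℙ : Measure Ω)]
    (n₀ : ℕ) (Y : ℕ → Ω → ℝ) (hmeas : ∀ k, Measurable (Y k))
    (hindep : iIndepFun Y ℙ)
    (hpos : ∀ k, ∀ᵐ ω ∂ℙ, 0 ≤ Y k ω)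
    (hint : ∀ k, Integrable (Y k) ℙ) (hmean : ∀ k, ∫ ω, Y k ω ∂ℙ = 1)
    (α : ℕ → ℝ) (hαpos : ∀ k < n₀, 0 < α k)
    (hlap : ∀ k < n₀, ∃ C : ℝ, ∀ᶠ x in atTop,
      x ^ (α k) * ∫ ω, Real.exp (-x * Y k ω) ∂ℙ ≤ C)
    (a : ℝ) (ha : 0 < a) (ha' : a < ∑ k ∈ Finset.range n₀, α k) :
    (∫⁻ ω, (ENNReal.ofReal (∑ k ∈ Finset.range n₀, Y k ω)) ^ (-a) ∂ℙ) ≠ ⊤ :=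
  stmt8_general n₀ Y hmeas hindep hpos α hlap a ha ha'
end

section
/- Let H : ℝ → ℝ be twice differentiable with bounded derivatives, X₁,…,Xₙ independent with E[X_k]=0, Var(X_k)=1, max_k E|X_k|^4 < ∞, X̄ = (X₁+⋯+Xₙ)/n, and Fₙ = √n (H(X̄) - E[H(X̄)]). Then ‖Fₙ - √n H'(0) X̄‖₂² ≤ (9‖H''‖_∞² / (4n)) · max_{1≤k≤n} E|X_k|^4. -/
/-!
Write `R = H(X̄) - H(0) - H'(0) X̄`. Since `E X̄ = 0`, `Fₙ - √n H'(0) X̄ = √n (R - E R)`, so the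
left side is `n Var R ≤ n E R²`. Taylor's bound `|R| ≤ ‖H''‖_∞ X̄² / 2` reduces everything to the
fourth moment of the centred sum, `E (X₁ + ⋯ + Xₙ)⁴ ≤ 3 n² max_k E X_k⁴`, proved by induction on
the number of summands from the binomial expansion of `E (A + B)⁴` for independent `A`, `B`.
-/

open MeasureTheory ProbabilityTheory Finset
open scoped ENNReal

lemma abs_le_half_mul_sq_of_abs_deriv_le_of_nonneg {g g' : ℝ → ℝ} {C x : ℝ}
    (hg : ∀ t, HasDerivAt g (g' t) t) (hg0 : g 0 = 0) (hg' : ∀ t, |g' t| ≤ C * |t|)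
    (hx : 0 ≤ x) : |g x| ≤ C / 2 * x ^ 2 := by
  refine image_norm_le_of_norm_deriv_right_le_deriv_boundary (f' := g')
    (B := fun t => C / 2 * t ^ 2) (B' := fun t => C * t)
    (fun t _ => (hg t).continuousAt.continuousWithinAt) (fun t _ => (hg t).hasDerivWithinAt)
    (by simp [hg0]) (fun t => ?_) (fun t ht => ?_) ⟨hx, le_rfl⟩
  · exact ((hasDerivAt_pow 2 t).const_mul (C / 2)).congr_deriv (by norm_num; ring)
  · simpa [abs_of_nonneg ht.1] using hg' t

lemma abs_le_half_mul_sq_of_abs_deriv_le {g g' : ℝ → ℝ} {C : ℝ}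
    (hg : ∀ t, HasDerivAt g (g' t) t) (hg0 : g 0 = 0) (hg' : ∀ t, |g' t| ≤ C * |t|) (x : ℝ) :
    |g x| ≤ C / 2 * x ^ 2 := by
  rcases le_total 0 x with hx | hx
  · exact abs_le_half_mul_sq_of_abs_deriv_le_of_nonneg hg hg0 hg' hx
  · simpa using abs_le_half_mul_sq_of_abs_deriv_le_of_nonneg (g := fun t => g (-t))
      (fun t => ((hg (-t)).comp t (hasDerivAt_neg t)).congr_deriv (mul_neg_one _))
      (by simpa using hg0) (fun t => by simpa using hg' (-t)) (neg_nonneg.mpr hx)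

lemma abs_taylor_remainder_le {H : ℝ → ℝ} (hH : Differentiable ℝ H)
    (hH' : Differentiable ℝ (deriv H)) {C : ℝ} (hC : ∀ x, |deriv (deriv H) x| ≤ C) (x : ℝ) :
    |H x - H 0 - deriv H 0 * x| ≤ C / 2 * x ^ 2 := by
  refine abs_le_half_mul_sq_of_abs_deriv_le (g := fun t => H t - H 0 - deriv H 0 * t)
    (g' := fun t => deriv H t - deriv H 0) (fun t => ?_) (by simp) (fun t => ?_) x
  · simpa using
      ((hH t).hasDerivAt.sub_const (H 0)).fun_sub ((hasDerivAt_id t).const_mul (deriv H 0))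
  · simpa using convex_univ.norm_image_sub_le_of_norm_deriv_le (fun y _ => hH' y)
      (fun y _ => hC y) (Set.mem_univ 0) (Set.mem_univ t)

section Moments

variable {Ω : Type*} {mΩ : MeasurableSpace Ω} {μ : Measure Ω}

lemma MeasureTheory.MemLp.integrable_pow_of_le [IsFiniteMeasure μ] {f : Ω → ℝ} {N i : ℕ}
    (hf : MemLp f N μ) (hi : i ≤ N) : Integrable (fun ω => f ω ^ i) μ := by
  have h := (hf.mono_exponent (by exact_mod_cast hi : (i : ℝ≥0∞) ≤ N)).integrable_norm_pow'
  exact (integrable_norm_iff (hf.aestronglyMeasurable.pow i)).mp (by simpa [norm_pow] using h)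

lemma sq_integral_sq_le_integral_pow_four [IsProbabilityMeasure μ] {f : Ω → ℝ}
    (hf : MemLp f 4 μ) : (∫ ω, f ω ^ 2 ∂μ) ^ 2 ≤ ∫ ω, f ω ^ 4 ∂μ := by
  have h := (convexOn_pow 2).map_integral_le (continuousOn_pow 2) isClosed_Ici
    (ae_of_all _ fun ω => sq_nonneg (f ω)) (hf.integrable_pow_of_le (by norm_num))
    (by simpa [Function.comp_def, ← pow_mul] using hf.integrable_pow_of_le le_rfl)
  simpa [← pow_mul] using h

lemma ProbabilityTheory.IndepFun.integral_add_pow [IsFiniteMeasure μ] {A B : Ω → ℝ} {N : ℕ}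
    (hAB : IndepFun A B μ) (hA : MemLp A N μ) (hB : MemLp B N μ) :
    ∫ ω, (A ω + B ω) ^ N ∂μ =
      ∑ i ∈ range (N + 1), (∫ ω, A ω ^ i ∂μ) * (∫ ω, B ω ^ (N - i) ∂μ) * N.choose i := by
  have hind : ∀ i j : ℕ, IndepFun (fun ω => A ω ^ i) (fun ω => B ω ^ j) μ := fun i j =>
    hAB.comp (measurable_id.pow_const i) (measurable_id.pow_const j)
  simp_rw [add_pow]
  rw [integral_finsetSum]
  · refine sum_congr rfl fun i _ => ?_
    rw [integral_mul_const, (hind i (N - i)).integral_fun_mul_eq_mul_integral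
      (hA.aestronglyMeasurable.pow i) (hB.aestronglyMeasurable.pow (N - i))]
  · intro i hi
    exact ((hind i (N - i)).integrable_mul
      (hA.integrable_pow_of_le (Nat.lt_succ_iff.mp (mem_range.mp hi)))
      (hB.integrable_pow_of_le (Nat.sub_le N i))).mul_const _

variable {ι : Type*} {X : ι → Ω → ℝ}

lemma integral_finsetSum_eq_zero (hint : ∀ k, Integrable (X k) μ)
    (hmean : ∀ k, ∫ ω, X k ω ∂μ = 0) (s : Finset ι) : ∫ ω, ∑ k ∈ s, X k ω ∂μ = 0 := by
  simp [integral_finsetSum s fun k _ => hint k, hmean]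

lemma integral_finsetSum_sq [IsProbabilityMeasure μ] (hmeas : ∀ k, Measurable (X k))
    (hindep : iIndepFun X μ)
    (hmom : ∀ k, MemLp (X k) 2 μ) (hmean : ∀ k, ∫ ω, X k ω ∂μ = 0)
    (hvar : ∀ k, ∫ ω, X k ω ^ 2 ∂μ = 1) (s : Finset ι) :
    ∫ ω, (∑ k ∈ s, X k ω) ^ 2 ∂μ = #s := by
  classical
  induction s using Finset.induction_on with
  | empty => simp
  | insert j s hj ih =>
    have h := (hindep.indepFun_finsetSum_of_notMem hmeas hj).integral_add_pow
      (memLp_finsetSum' s fun k _ => hmom k) (hmom j)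
    simp only [Finset.sum_apply] at h
    simp_rw [sum_insert hj, add_comm (X j _)]
    simp [h, sum_range_succ, ih, hvar, hmean,
      integral_finsetSum_eq_zero (fun k => (hmom k).integrable one_le_two) hmean,
      card_insert_of_notMem hj]
    ring

lemma integral_finsetSum_pow_four_le [IsProbabilityMeasure μ] (hmeas : ∀ k, Measurable (X k))
    (hindep : iIndepFun X μ) (hmom : ∀ k, MemLp (X k) 4 μ) (hmean : ∀ k, ∫ ω, X k ω ∂μ = 0)
    (hvar : ∀ k, ∫ ω, X k ω ^ 2 ∂μ = 1) {M : ℝ} (hM : ∀ k, ∫ ω, X k ω ^ 4 ∂μ ≤ M)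
    (s : Finset ι) : ∫ ω, (∑ k ∈ s, X k ω) ^ 4 ∂μ ≤ 3 * #s ^ 2 * M := by
  classical
  induction s using Finset.induction_on with
  | empty => simp
  | insert j s hj ih =>
    have hmom2 : ∀ k, MemLp (X k) 2 μ := fun k => (hmom k).mono_exponent (by norm_num)
    have h := (hindep.indepFun_finsetSum_of_notMem hmeas hj).integral_add_pow
      (memLp_finsetSum' s fun k _ => hmom k) (hmom j)
    simp only [Finset.sum_apply] at h
    have hM1 : 1 ≤ M := by
      simpa [hvar] using (sq_integral_sq_le_integral_pow_four (hmom j)).trans (hM j)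
    simp_rw [sum_insert hj, add_comm (X j _)]
    -- The odd moments vanish: `E (S + X j)⁴ = E S⁴ + 6 #s + E (X j)⁴`.
    simp [h, sum_range_succ, hvar, hmean, integral_finsetSum_sq hmeas hindep hmom2 hmean hvar,
      integral_finsetSum_eq_zero (fun k => (hmom k).integrable (by norm_num)) hmean,
      card_insert_of_notMem hj, Nat.choose]
    nlinarith [hM j, ih, mul_nonneg (Nat.cast_nonneg (α := ℝ) #s) (sub_nonneg.mpr hM1)]

lemma integral_sq_sub_linearization_le [IsProbabilityMeasure μ] {Y : Ω → ℝ} (hY : MemLp Y 4 μ)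
    (hY0 : ∫ ω, Y ω ∂μ = 0)
    {H : ℝ → ℝ} (hH : Differentiable ℝ H) (hH' : Differentiable ℝ (deriv H)) {C : ℝ}
    (hC : ∀ x, |deriv (deriv H) x| ≤ C) :
    ∫ ω, (H (Y ω) - ∫ ω', H (Y ω') ∂μ - deriv H 0 * Y ω) ^ 2 ∂μ
      ≤ (C / 2) ^ 2 * ∫ ω, Y ω ^ 4 ∂μ := by
  set R : Ω → ℝ := fun ω => H (Y ω) - H 0 - deriv H 0 * Y ω with hR
  have hRle : ∀ ω, |R ω| ≤ C / 2 * Y ω ^ 2 := fun ω =>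
    abs_taylor_remainder_le hH hH' hC (Y ω)
  have hRmeas : AEStronglyMeasurable R μ :=
    ((hH.continuous.comp_aestronglyMeasurable hY.aestronglyMeasurable).sub
      aestronglyMeasurable_const).sub (hY.aestronglyMeasurable.const_mul _)
  have hRint : Integrable R μ :=
    ((hY.integrable_pow_of_le (by norm_num : 2 ≤ 4)).const_mul (C / 2)).mono' hRmeas
      (ae_of_all _ hRle)
  have hYint : Integrable (fun ω => deriv H 0 * Y ω) μ :=
    (hY.integrable (by norm_num)).const_mul _
  have hHint : Integrable (fun ω => H (Y ω)) μ :=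
    ((hRint.add (integrable_const (H 0))).add hYint).congr
      (ae_of_all _ fun ω => by simp only [hR, Pi.add_apply]; ring)
  have hRmean : ∫ ω, R ω ∂μ = ∫ ω, H (Y ω) ∂μ - H 0 := by
    simp only [hR]
    rw [integral_sub (f := fun ω => H (Y ω) - H 0) (hHint.sub (integrable_const _)) hYint,
      integral_sub hHint (integrable_const _), integral_const_mul, hY0]
    simp
  calc ∫ ω, (H (Y ω) - ∫ ω', H (Y ω') ∂μ - deriv H 0 * Y ω) ^ 2 ∂μ
      = Var[R; μ] := by
        rw [variance_eq_integral hRmeas.aemeasurable, hRmean]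
        congr with ω
        simp only [hR]; ring
    _ ≤ ∫ ω, R ω ^ 2 ∂μ := variance_le_expectation_sq hRmeas
    _ ≤ ∫ ω, (C / 2) ^ 2 * Y ω ^ 4 ∂μ := by
        refine integral_mono_of_nonneg (ae_of_all _ fun ω => sq_nonneg _)
          ((hY.integrable_pow_of_le le_rfl).const_mul _) (ae_of_all _ fun ω => ?_)
        calc R ω ^ 2 = |R ω| ^ 2 := (sq_abs _).symm
          _ ≤ (C / 2 * Y ω ^ 2) ^ 2 := pow_le_pow_left₀ (abs_nonneg _) (hRle ω) 2
          _ = (C / 2) ^ 2 * Y ω ^ 4 := by ring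
    _ = (C / 2) ^ 2 * ∫ ω, Y ω ^ 4 ∂μ := integral_const_mul _ _

end Moments

theorem stmt15_general {Ω : Type*} [MeasureSpace Ω] [IsProbabilityMeasure (ℙ : Measure Ω)]
    {n : ℕ} [NeZero n] (X : Fin n → Ω → ℝ) (hmeas : ∀ k, Measurable (X k))
    (hindep : iIndepFun X ℙ)
    (hmean : ∀ k, ∫ ω, X k ω ∂ℙ = 0) (hvar : ∀ k, ∫ ω, (X k ω) ^ 2 ∂ℙ = 1)
    (hmom4 : ∀ k, MemLp (X k) 4 ℙ)
    (H : ℝ → ℝ) (hH : Differentiable ℝ H) (hH' : Differentiable ℝ (deriv H))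
    (C₂ : ℝ) (hC₂ : ∀ x, |deriv (deriv H) x| ≤ C₂)
    (Xbar : Ω → ℝ) (hXbar : Xbar = fun ω => (∑ k : Fin n, X k ω) / n)
    (F : Ω → ℝ)
    (hF : F = fun ω => Real.sqrt n * (H (Xbar ω) - ∫ ω', H (Xbar ω') ∂ℙ)) :
    ∫ ω, |F ω - Real.sqrt n * deriv H 0 * Xbar ω| ^ 2 ∂ℙ
      ≤ 9 * C₂ ^ 2 / (4 * n) *
          Finset.univ.sup' Finset.univ_nonempty
            (fun k => ∫ ω, |X k ω| ^ 4 ∂ℙ) := by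
  set M := Finset.univ.sup' Finset.univ_nonempty (fun k => ∫ ω, |X k ω| ^ 4 ∂ℙ)
  have hM : ∀ k, ∫ ω, X k ω ^ 4 ∂ℙ ≤ M := fun k =>
    le_sup'_of_le _ (mem_univ k) (by simp only [Even.pow_abs ⟨2, rfl⟩, le_refl])
  have hM0 : 0 ≤ M := (integral_nonneg fun ω => by positivity).trans (hM default)
  have hn : (0 : ℝ) < n := by exact_mod_cast NeZero.pos n
  have hXbar_mem : MemLp Xbar 4 ℙ := by
    simpa [hXbar, div_eq_inv_mul] using
      (memLp_finsetSum univ fun k _ => hmom4 k).const_mul (n⁻¹ : ℝ)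
  have hXbar_mean : ∫ ω, Xbar ω ∂ℙ = 0 := by
    simp [hXbar, integral_div,
      integral_finsetSum_eq_zero (fun k => (hmom4 k).integrable (by norm_num)) hmean]
  have hXbar_four : ∫ ω, Xbar ω ^ 4 ∂ℙ ≤ 3 * M / n ^ 2 := by
    have h := integral_finsetSum_pow_four_le hmeas hindep hmom4 hmean hvar hM univ
    simp only [hXbar, div_pow, integral_div, card_univ, Fintype.card_fin] at h ⊢
    rw [div_le_div_iff₀ (by positivity) (by positivity)]
    nlinarith
  have hsq : ∀ ω, |F ω - Real.sqrt n * deriv H 0 * Xbar ω| ^ 2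
      = n * (H (Xbar ω) - ∫ ω', H (Xbar ω') ∂ℙ - deriv H 0 * Xbar ω) ^ 2 := fun ω => by
    rw [sq_abs, hF, mul_assoc, ← mul_sub, mul_pow, Real.sq_sqrt hn.le]
  calc ∫ ω, |F ω - Real.sqrt n * deriv H 0 * Xbar ω| ^ 2 ∂ℙ
      = n * ∫ ω, (H (Xbar ω) - ∫ ω', H (Xbar ω') ∂ℙ - deriv H 0 * Xbar ω) ^ 2 ∂ℙ := by
        simp_rw [hsq]; exact integral_const_mul _ _
    _ ≤ n * ((C₂ / 2) ^ 2 * (3 * M / n ^ 2)) := by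
        gcongr
        exact (integral_sq_sub_linearization_le hXbar_mem hXbar_mean hH hH' hC₂).trans (by gcongr)
    _ ≤ 9 * C₂ ^ 2 / (4 * n) * M := by
        field_simp
        nlinarith [mul_nonneg (sq_nonneg C₂) hM0]

/-- Linearization of a smooth function of the sample mean: with
`Fₙ = √n (H(X̄) - E H(X̄))` and `‖H''‖_∞ ≤ C₂`,
`‖Fₙ - √n H'(0) X̄‖₂² ≤ (9 C₂²/(4n)) max_k E|X_k|⁴`. -/
theorem stmt15 {Ω : Type*} [MeasureSpace Ω] [IsProbabilityMeasure (ℙ : Measure Ω)]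
    {n : ℕ} [NeZero n] (X : Fin n → Ω → ℝ) (hmeas : ∀ k, Measurable (X k))
    (hindep : iIndepFun X ℙ)
    (hmean : ∀ k, ∫ ω, X k ω ∂ℙ = 0) (hvar : ∀ k, ∫ ω, (X k ω) ^ 2 ∂ℙ = 1)
    (hmom4 : ∀ k, MemLp (X k) 4 ℙ)
    (H : ℝ → ℝ) (hH : Differentiable ℝ H) (hH' : Differentiable ℝ (deriv H))
    (C₁ C₂ : ℝ) (hC₁ : ∀ x, |deriv H x| ≤ C₁) (hC₂ : ∀ x, |deriv (deriv H) x| ≤ C₂)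
    (Xbar : Ω → ℝ) (hXbar : Xbar = fun ω => (∑ k : Fin n, X k ω) / n)
    (F : Ω → ℝ)
    (hF : F = fun ω => Real.sqrt n * (H (Xbar ω) - ∫ ω', H (Xbar ω') ∂ℙ)) :
    ∫ ω, |F ω - Real.sqrt n * deriv H 0 * Xbar ω| ^ 2 ∂ℙ
      ≤ 9 * C₂ ^ 2 / (4 * n) *
          Finset.univ.sup' Finset.univ_nonempty
            (fun k => ∫ ω, |X k ω| ^ 4 ∂ℙ) :=
  stmt15_general X hmeas hindep hmean hvar hmom4 H hH hH' C₂ hC₂ Xbar hXbar F hF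
end

section
/- Let T be a nonnegative random variable with E[T] = 1 whose Laplace transform φ(x) = E[e^{-xT}] satisfies the differential inequality φ'(x) ≤ -x c² φ'(x) - φ(x) for all x ≥ 0 and some c > 0. Then φ(x) ≤ (1 + x c²)^{-1/c²} for all x ≥ 0. -/
/-!
Multiplying the differential inequality `(1 + x c²) φ' + φ ≤ 0` by the integrating factor
`(1 + x c²)^(1/c² - 1)` shows that `φ(x) (1 + x c²)^(1/c²)` is antitone on `[0, ∞)`, hence bounded
by its value `φ(0) = 1`.
-/

open MeasureTheory ProbabilityTheory Set Real

section IntegratingFactor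

variable {f : ℝ → ℝ} {a : ℝ}

theorem antitoneOn_mul_one_add_mul_rpow_of_deriv (ha : 0 < a)
    (hf : ∀ x ≥ 0, DifferentiableAt ℝ f x)
    (h : ∀ x ≥ 0, (1 + x * a) * deriv f x + f x ≤ 0) :
    AntitoneOn (fun x => f x * (1 + x * a) ^ (1 / a)) (Ici 0) := by
  have hbase : ∀ x ≥ (0 : ℝ), 0 < 1 + x * a := fun x hx => by positivity
  have hderiv : ∀ x ≥ (0 : ℝ), HasDerivAt (fun x => f x * (1 + x * a) ^ (1 / a))
      (((1 + x * a) * deriv f x + f x) * (1 + x * a) ^ (1 / a - 1)) x := by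
    intro x hx
    have hlin : HasDerivAt (fun y => 1 + y * a) a x := by
      simpa using ((hasDerivAt_id x).mul_const a).const_add 1
    refine ((hf x hx).hasDerivAt.mul
      (hlin.rpow_const (p := 1 / a) (Or.inl (hbase x hx).ne'))).congr_deriv ?_
    have hsplit : (1 + x * a) ^ (1 / a) = (1 + x * a) * (1 + x * a) ^ (1 / a - 1) := by
      conv_lhs => rw [← add_sub_cancel (1 : ℝ) (1 / a)]
      rw [rpow_add (hbase x hx), rpow_one]
    rw [hsplit, mul_one_div_cancel ha.ne']
    ring
  refine antitoneOn_of_hasDerivWithinAt_nonpos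
    (f' := fun x => ((1 + x * a) * deriv f x + f x) * (1 + x * a) ^ (1 / a - 1)) (convex_Ici 0)
    (fun x hx => (hderiv x hx).continuousAt.continuousWithinAt) ?_ ?_
  · intro x hx
    rw [interior_Ici] at hx
    exact (hderiv x hx.le).hasDerivWithinAt
  · intro x hx
    rw [interior_Ici] at hx
    exact mul_nonpos_of_nonpos_of_nonneg (h x hx.le) (rpow_pos_of_pos (hbase x hx.le) _).le

theorem le_mul_one_add_mul_rpow_neg_of_deriv (ha : 0 < a)
    (hf : ∀ x ≥ 0, DifferentiableAt ℝ f x)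
    (h : ∀ x ≥ 0, (1 + x * a) * deriv f x + f x ≤ 0) {x : ℝ} (hx : 0 ≤ x) :
    f x ≤ f 0 * (1 + x * a) ^ (-(1 / a)) := by
  have hbase : 0 < 1 + x * a := by positivity
  have hanti := antitoneOn_mul_one_add_mul_rpow_of_deriv ha hf h self_mem_Ici hx hx
  simp only [zero_mul, add_zero, one_rpow, mul_one] at hanti
  rw [rpow_neg hbase.le, ← div_eq_mul_inv, le_div_iff₀ (rpow_pos_of_pos hbase _)]
  exact hanti

end IntegratingFactor

theorem integrable_exp_neg_mul_of_nonneg {Ω : Type*} [MeasurableSpace Ω] {μ : Measure Ω}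
    [IsFiniteMeasure μ] {T : Ω → ℝ} {x : ℝ} (hT : AEMeasurable T μ)
    (hTpos : ∀ᵐ ω ∂μ, 0 ≤ T ω) (hx : 0 ≤ x) :
    Integrable (fun ω => exp (-x * T ω)) μ := by
  refine (integrable_const (1 : ℝ)).mono' (hT.const_mul (-x)).exp.aestronglyMeasurable ?_
  filter_upwards [hTpos] with ω hω
  rw [norm_of_nonneg (exp_pos _).le, exp_le_one_iff]
  nlinarith

theorem stmt18_general {Ω : Type*} [MeasureSpace Ω] [IsProbabilityMeasure (ℙ : Measure Ω)]
    (T : Ω → ℝ) (hT : Measurable T) (hTpos : ∀ᵐ ω ∂ℙ, 0 ≤ T ω)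
    (c : ℝ) (hc : 0 < c)
    (φ : ℝ → ℝ) (hφ : ∀ x, φ x = ∫ ω, Real.exp (-x * T ω) ∂ℙ)
    (hineq : ∀ x ≥ (0 : ℝ), deriv φ x ≤ -x * c ^ 2 * deriv φ x - φ x) :
    ∀ x ≥ (0 : ℝ), φ x ≤ (1 + x * c ^ 2) ^ (-(1 / c ^ 2)) := by
  have hφ_pos : ∀ x ≥ (0 : ℝ), 0 < φ x := fun x hx =>
    (hφ x).symm ▸ integral_exp_pos (integrable_exp_neg_mul_of_nonneg hT.aemeasurable hTpos hx)
  have hφ_zero : φ 0 = 1 := by simp [hφ]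
  have hode : ∀ x ≥ (0 : ℝ), (1 + x * c ^ 2) * deriv φ x + φ x ≤ 0 := fun x hx => by
    linarith [hineq x hx]
  -- `deriv φ x = 0` would give `φ x ≤ 0`; this also covers the junk value at non-differentiability.
  have hφ_diff : ∀ x ≥ (0 : ℝ), DifferentiableAt ℝ φ x := fun x hx =>
    differentiableAt_of_deriv_ne_zero fun h0 => by
      have h := hode x hx
      rw [h0, mul_zero, zero_add] at h
      exact (hφ_pos x hx).not_ge h
  intro x hx
  simpa [hφ_zero] using le_mul_one_add_mul_rpow_neg_of_deriv (by positivity) hφ_diff hode hx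

/-- If the Laplace transform `φ(x) = E[e^{-xT}]` of a nonnegative unit-mean random
variable satisfies `φ'(x) ≤ -x c² φ'(x) - φ(x)` for all `x ≥ 0`, then
`φ(x) ≤ (1 + x c²)^{-1/c²}` for all `x ≥ 0`. -/
theorem stmt18 {Ω : Type*} [MeasureSpace Ω] [IsProbabilityMeasure (ℙ : Measure Ω)]
    (T : Ω → ℝ) (hT : Measurable T) (hTpos : ∀ᵐ ω ∂ℙ, 0 ≤ T ω)
    (hTint : Integrable T ℙ) (hTmean : ∫ ω, T ω ∂ℙ = 1)
    (c : ℝ) (hc : 0 < c)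
    (φ : ℝ → ℝ) (hφ : ∀ x, φ x = ∫ ω, Real.exp (-x * T ω) ∂ℙ)
    (hineq : ∀ x ≥ (0 : ℝ), deriv φ x ≤ -x * c ^ 2 * deriv φ x - φ x) :
    ∀ x ≥ (0 : ℝ), φ x ≤ (1 + x * c ^ 2) ^ (-(1 / c ^ 2)) :=
  stmt18_general T hT hTpos c hc φ hφ hineq
end
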